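/- arXiv:2511.13337 — 2 statements merged into one kernel-verified Lean document; each statement's English description precedes it below -/
import Mathlib

section
/- For fixed a, b ∈ ℝ, the bivariate standard normal cdf ρ ↦ Φ₂(a,b;ρ) is continuous and strictly increasing on (−1,1). -/
/-!
Given `Z₁ = x`, `Z₂ ∼ N(ρx, 1 - ρ²)`, so
`Φ₂(a,b;ρ) = ∫_{x ≤ a} φ(x) Φ((b - ρx)/√(1 - ρ²)) dx`. On a compact subinterval of `(-1, 1)` the
`ρ`-derivative of the integrand is dominated by a multiple of `(1 + |x|) φ(x)`, and it equals
`∂ₓ φ₂(x,b;ρ)`. Hence `∂Φ₂/∂ρ = φ₂(a,b;ρ) > 0` (Plackett's identity), which gives continuity and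
strict monotonicity.
-/

open MeasureTheory Real Set

/-- Bivariate standard normal density with correlation ρ. -/
noncomputable def phi2 (a b ρ : ℝ) : ℝ :=
  (2 * Real.pi * Real.sqrt (1 - ρ ^ 2))⁻¹ *
    Real.exp (-(a ^ 2 - 2 * ρ * a * b + b ^ 2) / (2 * (1 - ρ ^ 2)))

/-- Bivariate standard normal cdf with correlation ρ. -/
noncomputable def Phi2 (a b ρ : ℝ) : ℝ :=
  ∫ x in Set.Iic a, ∫ y in Set.Iic b, phi2 x y ρ

open Filter ProbabilityTheory

theorem hasDerivAt_integral_Iic {E : Type*} [NormedAddCommGroup E] [NormedSpace ℝ E]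
    [CompleteSpace E] {f : ℝ → E} (hf : Integrable f) {t : ℝ} (hft : ContinuousAt f t) :
    HasDerivAt (fun u => ∫ x in Iic u, f x) (f t) t := by
  have hsplit : ∀ u, ∫ x in Iic u, f x = (∫ x in Iic 0, f x) + ∫ x in (0 : ℝ)..u, f x :=
    fun u => by rw [← intervalIntegral.integral_Iic_sub_Iic hf.integrableOn hf.integrableOn]; abel
  rw [funext hsplit]
  exact (intervalIntegral.integral_hasDerivAt_right hf.intervalIntegrable
    hf.aestronglyMeasurable.stronglyMeasurableAtFilter hft).const_add _

theorem setIntegral_Iic_comp_sub_div {E : Type*} [NormedAddCommGroup E] [NormedSpace ℝ E]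
    (f : ℝ → E) (b c : ℝ) {s : ℝ} (hs : 0 < s) :
    ∫ y in Iic b, f ((y - c) / s) = s • ∫ t in Iic ((b - c) / s), f t := by
  have hpre : ∀ y, y ∈ Iic b ↔ (y - c) / s ∈ Iic ((b - c) / s) := fun y => by
    simp only [mem_Iic, div_le_div_iff_of_pos_right hs, sub_le_sub_iff_right]
  rw [← integral_indicator measurableSet_Iic, ← integral_indicator measurableSet_Iic]
  calc ∫ y, (Iic b).indicator (fun y => f ((y - c) / s)) y
      = ∫ y, (Iic ((b - c) / s)).indicator f ((y - c) / s) := by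
        congr 1 with y
        by_cases hy : y ∈ Iic b
        · rw [indicator_of_mem hy, indicator_of_mem ((hpre y).1 hy)]
        · rw [indicator_of_notMem hy, indicator_of_notMem (mt (hpre y).2 hy)]
    _ = ∫ y, (Iic ((b - c) / s)).indicator f (y / s) :=
        integral_sub_right_eq_self (fun y => (Iic ((b - c) / s)).indicator f (y / s)) c
    _ = s • ∫ t, (Iic ((b - c) / s)).indicator f t := by
        rw [Measure.integral_comp_div, abs_of_pos hs]

theorem continuous_gaussianPDFReal (μ : ℝ) (v : NNReal) : Continuous (gaussianPDFReal μ v) := by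
  unfold gaussianPDFReal; fun_prop

theorem hasDerivAt_gaussianPDFReal (μ : ℝ) {v : NNReal} (hv : v ≠ 0) (x : ℝ) :
    HasDerivAt (gaussianPDFReal μ v) (-((x - μ) / v) * gaussianPDFReal μ v x) x := by
  have hv' : (v : ℝ) ≠ 0 := NNReal.coe_ne_zero.2 hv
  have h := ((((hasDerivAt_id' x).sub_const μ).fun_pow 2).fun_neg.div_const
    (2 * (v : ℝ))).exp.const_mul (√(2 * π * v))⁻¹
  rw [gaussianPDFReal_def]
  refine h.congr_deriv ?_
  field_simp
  ring

theorem gaussianPDFReal_eq_inv_sqrt_mul (μ : ℝ) {v : NNReal} (hv : v ≠ 0) (x : ℝ) :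
    gaussianPDFReal μ v x = (√v)⁻¹ * gaussianPDFReal 0 1 ((x - μ) / √v) := by
  have hv' : (0 : ℝ) < v := by positivity
  simp only [gaussianPDFReal, NNReal.coe_one, mul_one, sub_zero, div_pow, sq_sqrt hv'.le]
  rw [sqrt_mul' _ hv'.le, mul_inv, mul_comm (√(2 * π))⁻¹, mul_assoc]
  congr 3
  field_simp

theorem gaussianPDFReal_zero_one_le_one (x : ℝ) : gaussianPDFReal 0 1 x ≤ 1 := by
  have h2π : 1 ≤ √(2 * π) := one_le_sqrt.2 (by linarith [pi_gt_three])
  simp only [gaussianPDFReal, NNReal.coe_one, mul_one, sub_zero]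
  calc (√(2 * π))⁻¹ * rexp (-x ^ 2 / 2) ≤ 1 * 1 := by
        gcongr
        · exact inv_le_one_of_one_le₀ h2π
        · exact exp_le_one_iff.2 (by nlinarith [sq_nonneg x])
    _ = 1 := one_mul 1

theorem integrable_gaussianPDFReal_zero_one_mul_add_abs (c : ℝ) :
    Integrable (fun x => gaussianPDFReal 0 1 x * (c + |x|)) := by
  simp_rw [mul_add]
  have hmom : Integrable (fun x : ℝ => |x * rexp (-(1 / 2) * x ^ 2)|) :=
    (integrable_mul_exp_neg_mul_sq (by norm_num)).abs
  refine ((integrable_gaussianPDFReal 0 1).mul_const c).add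
    (((hmom.const_mul (√(2 * π))⁻¹)).congr (ae_of_all _ fun x => ?_))
  simp only [gaussianPDFReal, NNReal.coe_one, mul_one, sub_zero, abs_mul, abs_of_pos (exp_pos _)]
  ring_nf

noncomputable def stdNormalCDF (t : ℝ) : ℝ := ∫ x in Iic t, gaussianPDFReal 0 1 x

theorem hasDerivAt_stdNormalCDF (t : ℝ) : HasDerivAt stdNormalCDF (gaussianPDFReal 0 1 t) t :=
  hasDerivAt_integral_Iic (integrable_gaussianPDFReal 0 1)
    (continuous_gaussianPDFReal 0 1).continuousAt

theorem continuous_stdNormalCDF : Continuous stdNormalCDF :=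
  continuous_iff_continuousAt.2 fun t => (hasDerivAt_stdNormalCDF t).continuousAt

theorem stdNormalCDF_nonneg (t : ℝ) : 0 ≤ stdNormalCDF t :=
  setIntegral_nonneg measurableSet_Iic fun x _ => gaussianPDFReal_nonneg 0 1 x

theorem stdNormalCDF_le_one (t : ℝ) : stdNormalCDF t ≤ 1 :=
  (setIntegral_le_integral (integrable_gaussianPDFReal 0 1)
    (ae_of_all _ (gaussianPDFReal_nonneg 0 1))).trans_eq
    (integral_gaussianPDFReal_eq_one 0 one_ne_zero)

theorem integral_Iic_gaussianPDFReal (μ : ℝ) {v : NNReal} (hv : v ≠ 0) (b : ℝ) :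
    ∫ y in Iic b, gaussianPDFReal μ v y = stdNormalCDF ((b - μ) / √v) := by
  have hs : 0 < √(v : ℝ) := sqrt_pos.2 (by positivity)
  simp_rw [gaussianPDFReal_eq_inv_sqrt_mul μ hv, integral_const_mul,
    setIntegral_Iic_comp_sub_div _ b μ hs, smul_eq_mul, inv_mul_cancel_left₀ hs.ne']
  rfl

/-- The z-score of `b` under `N(ρ x, 1 - ρ²)`, the conditional law of `Z₂` given `Z₁ = x`. -/
noncomputable def condZScore (b ρ x : ℝ) : ℝ := (b - ρ * x) / √(1 - ρ ^ 2)

theorem phi2_eq_gaussianPDFReal_mul {ρ : ℝ} (hρ : ρ ^ 2 < 1) (x y : ℝ) :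
    phi2 x y ρ = gaussianPDFReal 0 1 x * gaussianPDFReal (ρ * x) (1 - ρ ^ 2).toNNReal y := by
  have hv : (0 : ℝ) < 1 - ρ ^ 2 := by linarith
  have hexp : -(x ^ 2 - 2 * ρ * x * y + y ^ 2) / (2 * (1 - ρ ^ 2))
      = -x ^ 2 / 2 + -(y - ρ * x) ^ 2 / (2 * (1 - ρ ^ 2)) := by
    field_simp; ring
  have hsqrt : √(2 * π) * √(2 * π * (1 - ρ ^ 2)) = 2 * π * √(1 - ρ ^ 2) := by
    rw [sqrt_mul (by positivity) (1 - ρ ^ 2), ← mul_assoc, mul_self_sqrt (by positivity)]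
  simp only [phi2, gaussianPDFReal, Real.coe_toNNReal _ hv.le, NNReal.coe_one, mul_one, sub_zero]
  rw [hexp, exp_add, ← hsqrt, mul_inv]
  ring

theorem phi2_comm (x y ρ : ℝ) : phi2 x y ρ = phi2 y x ρ := by
  unfold phi2; ring_nf

theorem phi2_pos {ρ : ℝ} (hρ : ρ ^ 2 < 1) (x y : ℝ) : 0 < phi2 x y ρ := by
  have hv : 0 < 1 - ρ ^ 2 := by linarith
  rw [phi2_eq_gaussianPDFReal_mul hρ]
  exact mul_pos (gaussianPDFReal_pos _ _ _ one_ne_zero)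
    (gaussianPDFReal_pos _ _ _ (Real.toNNReal_pos.2 hv).ne')

theorem integral_Iic_phi2 {ρ : ℝ} (hρ : ρ ^ 2 < 1) (b x : ℝ) :
    ∫ y in Iic b, phi2 x y ρ = gaussianPDFReal 0 1 x * stdNormalCDF (condZScore b ρ x) := by
  have hv : 0 < 1 - ρ ^ 2 := by linarith
  simp_rw [phi2_eq_gaussianPDFReal_mul hρ, integral_const_mul,
    integral_Iic_gaussianPDFReal _ (Real.toNNReal_pos.2 hv).ne', Real.coe_toNNReal _ hv.le,
    condZScore]

theorem phi2_eq_mul_condZScore {ρ : ℝ} (hρ : ρ ^ 2 < 1) (x b : ℝ) :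
    phi2 x b ρ =
      gaussianPDFReal 0 1 x * ((√(1 - ρ ^ 2))⁻¹ * gaussianPDFReal 0 1 (condZScore b ρ x)) := by
  have hv : 0 < 1 - ρ ^ 2 := by linarith
  rw [phi2_eq_gaussianPDFReal_mul hρ,
    gaussianPDFReal_eq_inv_sqrt_mul _ (Real.toNNReal_pos.2 hv).ne', Real.coe_toNNReal _ hv.le,
    condZScore]

theorem hasDerivAt_condZScore {ρ : ℝ} (hρ : ρ ^ 2 < 1) (b x : ℝ) :
    HasDerivAt (fun r => condZScore b r x) ((ρ * b - x) / √(1 - ρ ^ 2) ^ 3) ρ := by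
  have hv : 0 < 1 - ρ ^ 2 := by linarith
  have hs : 0 < √(1 - ρ ^ 2) := sqrt_pos.2 hv
  have hsqrt : HasDerivAt (fun r => √(1 - r ^ 2)) (-ρ / √(1 - ρ ^ 2)) ρ := by
    refine (((hasDerivAt_pow 2 ρ).const_sub 1).sqrt hv.ne').congr_deriv ?_
    field_simp
    ring
  refine ((((hasDerivAt_id' ρ).mul_const x).const_sub b).div hsqrt hs.ne').congr_deriv ?_
  field_simp
  rw [sq_sqrt hv.le]
  ring

theorem hasDerivAt_phi2_fst {ρ : ℝ} (hρ : ρ ^ 2 < 1) (b x : ℝ) :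
    HasDerivAt (fun t => phi2 t b ρ) (phi2 x b ρ * ((ρ * b - x) / (1 - ρ ^ 2))) x := by
  have hv : 0 < 1 - ρ ^ 2 := by linarith
  simp_rw [phi2_comm _ b, phi2_eq_gaussianPDFReal_mul hρ b]
  refine ((hasDerivAt_gaussianPDFReal _ (Real.toNNReal_pos.2 hv).ne' x).const_mul _).congr_deriv ?_
  rw [Real.coe_toNNReal _ hv.le]
  ring

theorem hasDerivAt_gaussianPDFReal_mul_stdNormalCDF_condZScore {ρ : ℝ} (hρ : ρ ^ 2 < 1)
    (b x : ℝ) :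
    HasDerivAt (fun r => gaussianPDFReal 0 1 x * stdNormalCDF (condZScore b r x))
      (phi2 x b ρ * ((ρ * b - x) / (1 - ρ ^ 2))) ρ := by
  have hv : 0 < 1 - ρ ^ 2 := by linarith
  refine (((hasDerivAt_stdNormalCDF _).comp ρ (hasDerivAt_condZScore hρ b x)).const_mul
    _).congr_deriv ?_
  rw [phi2_eq_mul_condZScore hρ, pow_succ, sq_sqrt hv.le]
  field_simp

theorem abs_phi2_mul_le {m r : ℝ} (hm : m < 1) (hr : |r| ≤ m) (b x : ℝ) :
    |phi2 x b r * ((r * b - x) / (1 - r ^ 2))| ≤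
      gaussianPDFReal 0 1 x * (|b| + |x|) / (√(1 - m ^ 2) * (1 - m ^ 2)) := by
  have hrm : r ^ 2 ≤ m ^ 2 := sq_le_sq' (abs_le.1 hr).1 (abs_le.1 hr).2
  have hm2 : 0 < 1 - m ^ 2 := by nlinarith [abs_nonneg r]
  have hr2 : r ^ 2 < 1 := by linarith
  have hnum : |r * b - x| ≤ |b| + |x| := by
    calc |r * b - x| ≤ |r| * |b| + |x| := by rw [← abs_mul]; exact abs_sub _ _
      _ ≤ |b| + |x| := by gcongr; nlinarith [abs_nonneg b]
  have hg := gaussianPDFReal_zero_one_le_one (condZScore b r x)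
  have hg0 := gaussianPDFReal_nonneg 0 1 x
  have hphi : 0 ≤ phi2 x b r := (phi2_pos hr2 x b).le
  rw [abs_mul, abs_of_nonneg hphi, phi2_eq_mul_condZScore hr2, abs_div, mul_div_assoc,
    abs_of_pos (by linarith : 0 < 1 - r ^ 2)]
  calc gaussianPDFReal 0 1 x * ((√(1 - r ^ 2))⁻¹ * gaussianPDFReal 0 1 (condZScore b r x)) *
        (|r * b - x| / (1 - r ^ 2))
      ≤ gaussianPDFReal 0 1 x * ((√(1 - r ^ 2))⁻¹ * 1) * ((|b| + |x|) / (1 - r ^ 2)) := by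
        gcongr
    _ = gaussianPDFReal 0 1 x * ((|b| + |x|) / (√(1 - r ^ 2) * (1 - r ^ 2))) := by
        field_simp
    _ ≤ gaussianPDFReal 0 1 x * ((|b| + |x|) / (√(1 - m ^ 2) * (1 - m ^ 2))) := by
        gcongr

theorem integrable_phi2_mul {ρ : ℝ} (hρ : ρ ^ 2 < 1) (b : ℝ) :
    Integrable (fun x => phi2 x b ρ * ((ρ * b - x) / (1 - ρ ^ 2))) := by
  refine ((integrable_gaussianPDFReal_zero_one_mul_add_abs |b|).div_const
    (√(1 - |ρ| ^ 2) * (1 - |ρ| ^ 2))).mono' ?_ (ae_of_all _ fun x => ?_)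
  · unfold phi2; fun_prop
  · exact abs_phi2_mul_le (by simpa using hρ) le_rfl b x

theorem integral_Iic_phi2_mul {ρ : ℝ} (hρ : ρ ^ 2 < 1) (a b : ℝ) :
    ∫ x in Iic a, phi2 x b ρ * ((ρ * b - x) / (1 - ρ ^ 2)) = phi2 a b ρ := by
  have hderiv := hasDerivAt_phi2_fst hρ b
  have hint : Integrable (fun x => phi2 x b ρ) := by
    simp_rw [phi2_comm _ b, phi2_eq_gaussianPDFReal_mul hρ b]
    exact (integrable_gaussianPDFReal _ _).const_mul _
  have hlim := tendsto_zero_of_hasDerivAt_of_integrableOn_Iic (a := a) (fun x _ => hderiv x)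
    (integrable_phi2_mul hρ b).integrableOn hint.integrableOn
  rw [integral_Iic_of_hasDerivAt_of_tendsto (hderiv a).continuousAt.continuousWithinAt
    (fun x _ => hderiv x) (integrable_phi2_mul hρ b).integrableOn hlim, sub_zero]

theorem hasDerivAt_integral_Iic_gaussianPDFReal_mul_stdNormalCDF {ρ : ℝ} (hρ : |ρ| < 1)
    (a b : ℝ) :
    HasDerivAt (fun r => ∫ x in Iic a, gaussianPDFReal 0 1 x * stdNormalCDF (condZScore b r x))
      (∫ x in Iic a, phi2 x b ρ * ((ρ * b - x) / (1 - ρ ^ 2))) ρ := by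
  obtain ⟨m, hρm, hm⟩ := exists_between hρ
  have hcont : ∀ r, Continuous fun x => gaussianPDFReal 0 1 x * stdNormalCDF (condZScore b r x) :=
    fun r => (continuous_gaussianPDFReal 0 1).mul
      (continuous_stdNormalCDF.comp (by unfold condZScore; fun_prop))
  have hdom : Integrable (fun x => gaussianPDFReal 0 1 x * stdNormalCDF (condZScore b ρ x)) :=
    (integrable_gaussianPDFReal 0 1).mono' (hcont ρ).aestronglyMeasurable (ae_of_all _ fun x => by
      rw [norm_mul, Real.norm_of_nonneg (gaussianPDFReal_nonneg 0 1 x),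
        Real.norm_of_nonneg (stdNormalCDF_nonneg _)]
      exact mul_le_of_le_one_right (gaussianPDFReal_nonneg 0 1 x) (stdNormalCDF_le_one _))
  refine (hasDerivAt_integral_of_dominated_loc_of_deriv_le (Ioo_mem_nhds (abs_lt.1 hρm).1
    (abs_lt.1 hρm).2) (Eventually.of_forall fun r => (hcont r).aestronglyMeasurable)
    hdom.integrableOn (integrable_phi2_mul (by simpa using hρ) b).aestronglyMeasurable.restrict
    (ae_of_all _ fun x r hr => abs_phi2_mul_le hm (abs_lt.2 hr).le b x)
    ((integrable_gaussianPDFReal_zero_one_mul_add_abs |b|).div_const _).integrableOn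
    (ae_of_all _ fun x r hr => hasDerivAt_gaussianPDFReal_mul_stdNormalCDF_condZScore
      ((sq_lt_one_iff_abs_lt_one _).2 ((abs_lt.2 hr).trans hm)) b x)).2

theorem hasDerivAt_Phi2 {ρ : ℝ} (hρ : ρ ∈ Ioo (-1) 1) (a b : ℝ) :
    HasDerivAt (Phi2 a b) (phi2 a b ρ) ρ := by
  have hρ' : |ρ| < 1 := abs_lt.2 hρ
  rw [← integral_Iic_phi2_mul ((sq_lt_one_iff_abs_lt_one _).2 hρ') a b]
  refine (hasDerivAt_integral_Iic_gaussianPDFReal_mul_stdNormalCDF hρ' a b).congr_of_eventuallyEq ?_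
  filter_upwards [Ioo_mem_nhds hρ.1 hρ.2] with r hr
  exact integral_congr_ae (ae_of_all _ fun x =>
    integral_Iic_phi2 ((sq_lt_one_iff_abs_lt_one _).2 (abs_lt.2 hr)) b x)

/-- For fixed `a, b`, the map `ρ ↦ Φ₂(a,b;ρ)` is continuous and strictly
increasing on `(−1, 1)`. -/
theorem Phi2_continuousOn_strictMonoOn (a b : ℝ) :
    ContinuousOn (fun ρ => Phi2 a b ρ) (Set.Ioo (-1 : ℝ) 1) ∧
    StrictMonoOn (fun ρ => Phi2 a b ρ) (Set.Ioo (-1 : ℝ) 1) := by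
  have hcont : ContinuousOn (Phi2 a b) (Ioo (-1) 1) := fun ρ hρ =>
    (hasDerivAt_Phi2 hρ a b).continuousAt.continuousWithinAt
  refine ⟨hcont, strictMonoOn_of_deriv_pos (convex_Ioo _ _) hcont fun ρ hρ => ?_⟩
  rw [interior_Ioo] at hρ
  rw [(hasDerivAt_Phi2 hρ a b).deriv]
  exact phi2_pos ((sq_lt_one_iff_abs_lt_one _).2 (abs_lt.2 hρ)) a b
end

section
/- For discrete random vector (X,Y) with joint pmf h, marginal cdfs F_X, F_Y, marginal pmfs f_X, f_Y, and joint cdf H, Kendall's tau τ = P((X1−X2)(Y1−Y2)>0) − P((X1−X2)(Y1−Y2)<0) (for i.i.d. copies) admits the representation τ = Σ_x Σ_y h(x,y)·[4H(x−1,y−1) − h(x,y)] + Σ_x f_X(x)² + Σ_y f_Y(y)² − 1. -/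
open MeasureTheory ProbabilityTheory

/-- For a discrete random vector `(X,Y)` on `ℕ²` with joint pmf `h`, joint cdf `H`
(with `H(−1,·)=H(·,−1)=0`), and marginal pmfs `f_X, f_Y`, Kendall's tau of two
i.i.d. copies admits the representation
`τ = Σ_x Σ_y h(x,y)(4H(x−1,y−1) − h(x,y)) + Σ_x f_X(x)² + Σ_y f_Y(y)² − 1`. -/
theorem kendall_tau_discrete_representation {Ω : Type*} [MeasurableSpace Ω]
    (P : Measure Ω) [IsProbabilityMeasure P] (X1 Y1 X2 Y2 : Ω → ℕ)
    (hm : Measurable fun ω => (X1 ω, Y1 ω)) (hm' : Measurable fun ω => (X2 ω, Y2 ω))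
    (hid : IdentDistrib (fun ω => (X1 ω, Y1 ω)) (fun ω => (X2 ω, Y2 ω)) P P)
    (hind : IndepFun (fun ω => (X1 ω, Y1 ω)) (fun ω => (X2 ω, Y2 ω)) P)
    (h : ℕ → ℕ → ℝ) (hh : ∀ x y, h x y = (P {ω | X1 ω = x ∧ Y1 ω = y}).toReal)
    (H : ℤ → ℤ → ℝ)
    (hH : ∀ x y, H x y = (P {ω | (X1 ω : ℤ) ≤ x ∧ (Y1 ω : ℤ) ≤ y}).toReal)
    (fX fY : ℕ → ℝ)
    (hfX : ∀ x, fX x = (P {ω | X1 ω = x}).toReal)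
    (hfY : ∀ y, fY y = (P {ω | Y1 ω = y}).toReal) :
    (P {ω | 0 < ((X1 ω : ℤ) - (X2 ω : ℤ)) * ((Y1 ω : ℤ) - (Y2 ω : ℤ))}).toReal -
      (P {ω | ((X1 ω : ℤ) - (X2 ω : ℤ)) * ((Y1 ω : ℤ) - (Y2 ω : ℤ)) < 0}).toReal =
    (∑' x : ℕ, ∑' y : ℕ, h x y * (4 * H ((x : ℤ) - 1) ((y : ℤ) - 1) - h x y)) +
      (∑' x : ℕ, (fX x) ^ 2) + (∑' y : ℕ, (fY y) ^ 2) - 1 := by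
  classical
  set μ : Measure (ℕ × ℕ) := P.map (fun ω => (X1 ω, Y1 ω)) with hμdef
  have hprob : IsProbabilityMeasure μ := Measure.isProbabilityMeasure_map hm.aemeasurable
  have hmap2 : P.map (fun ω => (X2 ω, Y2 ω)) = μ := hid.map_eq.symm
  have measN : ∀ (S : Set (ℕ × ℕ)), MeasurableSet S := fun S => S.to_countable.measurableSet
  have measNN : ∀ (S : Set ((ℕ × ℕ) × (ℕ × ℕ))), MeasurableSet S :=
    fun S => S.to_countable.measurableSet
  have hν : P.map (fun ω => ((X1 ω, Y1 ω), (X2 ω, Y2 ω))) = μ.prod μ := by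
    have := (indepFun_iff_map_prod_eq_prod_map_map hm.aemeasurable hm'.aemeasurable).mp hind
    rw [this, hmap2]
  have hmT : Measurable (fun ω => ((X1 ω, Y1 ω), (X2 ω, Y2 ω))) := hm.prodMk hm'
  have hPT : ∀ S : Set ((ℕ × ℕ) × (ℕ × ℕ)),
      P ((fun ω => ((X1 ω, Y1 ω), (X2 ω, Y2 ω))) ⁻¹' S) = (μ.prod μ) S := by
    intro S
    rw [← hν, Measure.map_apply hmT (measNN S)]
  have hPμ : ∀ S : Set (ℕ × ℕ), P ((fun ω => (X1 ω, Y1 ω)) ⁻¹' S) = μ S :=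
    fun S => (Measure.map_apply hm (measN S)).symm
  have hswap : ∀ S : Set ((ℕ × ℕ) × (ℕ × ℕ)),
      (μ.prod μ) (Prod.swap ⁻¹' S) = (μ.prod μ) S := by
    intro S
    conv_rhs => rw [← Measure.prod_swap (μ := μ) (ν := μ)]
    rw [Measure.map_apply measurable_swap (measNN S)]
  -- key sets
  set Sa : Set ((ℕ × ℕ) × (ℕ × ℕ)) := {p | p.2.1 < p.1.1 ∧ p.2.2 < p.1.2} with hSa
  set Sb : Set ((ℕ × ℕ) × (ℕ × ℕ)) := {p | p.2.1 < p.1.1 ∧ p.1.2 < p.2.2} with hSb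
  set Sc : Set ((ℕ × ℕ) × (ℕ × ℕ)) := {p | p.1.1 = p.2.1} with hSc
  set Sd : Set ((ℕ × ℕ) × (ℕ × ℕ)) := {p | p.1.2 = p.2.2} with hSd
  set Se : Set ((ℕ × ℕ) × (ℕ × ℕ)) := {p | p.1.1 = p.2.1 ∧ p.1.2 = p.2.2} with hSe
  set a := (μ.prod μ) Sa with hadef
  set b := (μ.prod μ) Sb with hbdef
  set c := (μ.prod μ) Sc with hcdef
  set d := (μ.prod μ) Sd with hddef
  set e := (μ.prod μ) Se with hedef
  -- positive part event
  have hposset : {ω | 0 < ((X1 ω : ℤ) - (X2 ω : ℤ)) * ((Y1 ω : ℤ) - (Y2 ω : ℤ))} =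
      (fun ω => ((X1 ω, Y1 ω), (X2 ω, Y2 ω))) ⁻¹' (Sa ∪ Prod.swap ⁻¹' Sa) := by
    ext ω
    simp only [Set.mem_setOf_eq, Set.mem_preimage, Set.mem_union, hSa, Prod.swap,
      mul_pos_iff, sub_pos, sub_neg, Nat.cast_lt]
  have hnegset : {ω | ((X1 ω : ℤ) - (X2 ω : ℤ)) * ((Y1 ω : ℤ) - (Y2 ω : ℤ)) < 0} =
      (fun ω => ((X1 ω, Y1 ω), (X2 ω, Y2 ω))) ⁻¹' (Sb ∪ Prod.swap ⁻¹' Sb) := by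
    ext ω
    simp only [Set.mem_setOf_eq, Set.mem_preimage, Set.mem_union, hSb, Prod.swap,
      mul_neg_iff, sub_pos, sub_neg, Nat.cast_lt]
  have hdisja : Disjoint Sa (Prod.swap ⁻¹' Sa) := by
    rw [Set.disjoint_left]
    rintro p ⟨h1, _⟩ ⟨h1', _⟩
    exact absurd h1' (lt_asymm h1)
  have hdisjb : Disjoint Sb (Prod.swap ⁻¹' Sb) := by
    rw [Set.disjoint_left]
    rintro p ⟨h1, _⟩ ⟨h1', _⟩
    exact absurd h1' (lt_asymm h1)
  have hpos : P {ω | 0 < ((X1 ω : ℤ) - (X2 ω : ℤ)) * ((Y1 ω : ℤ) - (Y2 ω : ℤ))} = a + a := by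
    rw [hposset, hPT, measure_union hdisja (measNN _), hswap]
  have hneg : P {ω | ((X1 ω : ℤ) - (X2 ω : ℤ)) * ((Y1 ω : ℤ) - (Y2 ω : ℤ)) < 0} = b + b := by
    rw [hnegset, hPT, measure_union hdisjb (measNN _), hswap]
  -- total decomposition
  have hunivset : (Set.univ : Set ((ℕ × ℕ) × (ℕ × ℕ))) =
      (Sa ∪ Prod.swap ⁻¹' Sa) ∪ ((Sb ∪ Prod.swap ⁻¹' Sb) ∪ (Sc ∪ Sd)) := by
    ext p
    simp only [Set.mem_univ, Set.mem_union, Set.mem_preimage, hSa, hSb, hSc, hSd,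
      Set.mem_setOf_eq, Prod.swap, true_iff]
    omega
  have hdisj1 : Disjoint (Sa ∪ Prod.swap ⁻¹' Sa) ((Sb ∪ Prod.swap ⁻¹' Sb) ∪ (Sc ∪ Sd)) := by
    rw [Set.disjoint_left]
    intro p hp hq
    simp only [Set.mem_union, Set.mem_preimage, hSa, hSb, hSc, hSd, Set.mem_setOf_eq,
      Prod.swap] at hp hq
    omega
  have hdisj2 : Disjoint (Sb ∪ Prod.swap ⁻¹' Sb) (Sc ∪ Sd) := by
    rw [Set.disjoint_left]
    intro p hp hq
    simp only [Set.mem_union, Set.mem_preimage, hSb, hSc, hSd, Set.mem_setOf_eq,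
      Prod.swap] at hp hq
    omega
  have hinter : Sc ∩ Sd = Se := by
    ext p
    simp [hSc, hSd, hSe, Set.mem_setOf_eq]
  have h2cd : (μ.prod μ) (Sc ∪ Sd) + e = c + d := by
    rw [hedef, ← hinter]
    exact measure_union_add_inter Sc (measNN Sd)
  have htotE : 1 + e = a + a + (b + b) + (c + d) := by
    have h1 : (μ.prod μ) Set.univ = 1 := measure_univ
    rw [hunivset] at h1
    rw [measure_union hdisj1 (measNN _), measure_union hdisj2 (measNN _)] at h1
    rw [measure_union hdisja (measNN _), measure_union hdisjb (measNN _), hswap, hswap] at h1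
    rw [← hadef, ← hbdef] at h1
    calc (1 : ENNReal) + e = (a + a + (b + b + (μ.prod μ) (Sc ∪ Sd))) + e := by rw [h1]
      _ = a + a + (b + b) + ((μ.prod μ) (Sc ∪ Sd) + e) := by ring
      _ = a + a + (b + b) + (c + d) := by rw [h2cd]
  -- measure values as tsums
  have hμsing : ∀ p : ℕ × ℕ, μ {p} ≠ ⊤ := fun p => measure_ne_top μ {p}
  have ha : a = ∑' p : ℕ × ℕ, μ {q : ℕ × ℕ | q.1 < p.1 ∧ q.2 < p.2} * μ {p} := by
    rw [hadef, Measure.prod_apply (measNN Sa), lintegral_countable']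
    rfl
  have he : e = ∑' p : ℕ × ℕ, μ {p} * μ {p} := by
    rw [hedef, Measure.prod_apply (measNN Se), lintegral_countable']
    refine tsum_congr fun p => ?_
    have hqset : (Prod.mk p ⁻¹' Se : Set (ℕ × ℕ)) = {p} := by
      ext q
      simp only [Set.mem_preimage, hSe, Set.mem_setOf_eq, Set.mem_singleton_iff, Prod.ext_iff]
      omega
    rw [hqset]
  have hc : c = ∑' p : ℕ × ℕ, μ {q : ℕ × ℕ | q.1 = p.1} * μ {p} := by
    rw [hcdef, Measure.prod_apply (measNN Sc), lintegral_countable']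
    refine tsum_congr fun p => ?_
    have hqset : (Prod.mk p ⁻¹' Sc : Set (ℕ × ℕ)) = {q : ℕ × ℕ | q.1 = p.1} := by
      ext q
      simp only [Set.mem_preimage, hSc, Set.mem_setOf_eq]
      omega
    rw [hqset]
  have hd : d = ∑' p : ℕ × ℕ, μ {q : ℕ × ℕ | q.2 = p.2} * μ {p} := by
    rw [hddef, Measure.prod_apply (measNN Sd), lintegral_countable']
    refine tsum_congr fun p => ?_
    have hqset : (Prod.mk p ⁻¹' Sd : Set (ℕ × ℕ)) = {q : ℕ × ℕ | q.2 = p.2} := by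
      ext q
      simp only [Set.mem_preimage, hSd, Set.mem_setOf_eq]
      omega
    rw [hqset]
  -- marginal fibers
  have hfiber1 : ∀ x : ℕ, μ {q : ℕ × ℕ | q.1 = x} = ∑' y : ℕ, μ {(x, y)} := by
    intro x
    have hset : {q : ℕ × ℕ | q.1 = x} = ⋃ y : ℕ, {(x, y)} := by
      ext ⟨q1, q2⟩
      simp [Prod.ext_iff, eq_comm]
    rw [hset, measure_iUnion ?_ (fun y => measN _)]
    intro y y' hyy'
    simp only [Function.onFun, Set.disjoint_left, Set.mem_singleton_iff]
    rintro q rfl hq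
    exact hyy' (by simpa [Prod.ext_iff] using hq)
  have hfiber2 : ∀ y : ℕ, μ {q : ℕ × ℕ | q.2 = y} = ∑' x : ℕ, μ {(x, y)} := by
    intro y
    have hset : {q : ℕ × ℕ | q.2 = y} = ⋃ x : ℕ, {(x, y)} := by
      ext ⟨q1, q2⟩
      simp [Prod.ext_iff, eq_comm]
    rw [hset, measure_iUnion ?_ (fun x => measN _)]
    intro x x' hxx'
    simp only [Function.onFun, Set.disjoint_left, Set.mem_singleton_iff]
    rintro q rfl hq
    exact hxx' (by simpa [Prod.ext_iff] using hq)
  -- identify h, H, fX, fY with μ-quantities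
  have hhμ : ∀ x y : ℕ, h x y = (μ {((x : ℕ), (y : ℕ))}).toReal := by
    intro x y
    rw [hh]
    have hset : {ω | X1 ω = x ∧ Y1 ω = y} =
        (fun ω => (X1 ω, Y1 ω)) ⁻¹' {((x : ℕ), (y : ℕ))} := by
      ext ω
      simp [Prod.ext_iff]
    rw [hset, hPμ]
  have hHμ : ∀ x y : ℕ, H ((x : ℤ) - 1) ((y : ℤ) - 1) =
      (μ {q : ℕ × ℕ | q.1 < x ∧ q.2 < y}).toReal := by
    intro x y
    rw [hH]
    have hset : {ω | (X1 ω : ℤ) ≤ (x : ℤ) - 1 ∧ (Y1 ω : ℤ) ≤ (y : ℤ) - 1} =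
        (fun ω => (X1 ω, Y1 ω)) ⁻¹' {q : ℕ × ℕ | q.1 < x ∧ q.2 < y} := by
      ext ω
      simp only [Set.mem_setOf_eq, Set.mem_preimage]
      constructor
      · rintro ⟨h1, h2⟩; exact ⟨by omega, by omega⟩
      · rintro ⟨h1, h2⟩; exact ⟨by omega, by omega⟩
    rw [hset, hPμ]
  have hfXμ : ∀ x : ℕ, fX x = (μ {q : ℕ × ℕ | q.1 = x}).toReal := by
    intro x
    rw [hfX, ← hPμ]
    rfl
  have hfYμ : ∀ y : ℕ, fY y = (μ {q : ℕ × ℕ | q.2 = y}).toReal := by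
    intro y
    rw [hfY, ← hPμ]
    rfl
  -- ENNReal-level double sums
  set F : ℕ → ℕ → ENNReal := fun x y => μ {q : ℕ × ℕ | q.1 < x ∧ q.2 < y} * μ {(x, y)} with hF
  set G : ℕ → ℕ → ENNReal := fun x y => μ {(x, y)} * μ {(x, y)} with hG
  have ha2 : a = ∑' x : ℕ, ∑' y : ℕ, F x y := by
    rw [ha, ← ENNReal.tsum_prod]
  have he2 : e = ∑' x : ℕ, ∑' y : ℕ, G x y := by
    rw [he, ← ENNReal.tsum_prod]
  have hc2 : c = ∑' x : ℕ, μ {q : ℕ × ℕ | q.1 = x} * μ {q : ℕ × ℕ | q.1 = x} := by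
    calc c = ∑' p : ℕ × ℕ, μ {q : ℕ × ℕ | q.1 = p.1} * μ {p} := hc
      _ = ∑' x : ℕ, ∑' y : ℕ, μ {q : ℕ × ℕ | q.1 = x} * μ {(x, y)} :=
          ENNReal.tsum_prod (f := fun x y => μ {q : ℕ × ℕ | q.1 = x} * μ {(x, y)})
      _ = ∑' x : ℕ, μ {q : ℕ × ℕ | q.1 = x} * ∑' y : ℕ, μ {(x, y)} :=
          tsum_congr fun x => ENNReal.tsum_mul_left
      _ = ∑' x : ℕ, μ {q : ℕ × ℕ | q.1 = x} * μ {q : ℕ × ℕ | q.1 = x} :=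
          tsum_congr fun x => by rw [← hfiber1 x]
  have hd2 : d = ∑' y : ℕ, μ {q : ℕ × ℕ | q.2 = y} * μ {q : ℕ × ℕ | q.2 = y} := by
    calc d = ∑' p : ℕ × ℕ, μ {q : ℕ × ℕ | q.2 = p.2} * μ {p} := hd
      _ = ∑' x : ℕ, ∑' y : ℕ, μ {q : ℕ × ℕ | q.2 = y} * μ {(x, y)} :=
          ENNReal.tsum_prod (f := fun x y => μ {q : ℕ × ℕ | q.2 = y} * μ {(x, y)})
      _ = ∑' y : ℕ, ∑' x : ℕ, μ {q : ℕ × ℕ | q.2 = y} * μ {(x, y)} := ENNReal.tsum_comm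
      _ = ∑' y : ℕ, μ {q : ℕ × ℕ | q.2 = y} * ∑' x : ℕ, μ {(x, y)} :=
          tsum_congr fun y => ENNReal.tsum_mul_left
      _ = ∑' y : ℕ, μ {q : ℕ × ℕ | q.2 = y} * μ {q : ℕ × ℕ | q.2 = y} :=
          tsum_congr fun y => by rw [← hfiber2 y]
  have hane : a ≠ ⊤ := measure_ne_top _ _
  have hbne : b ≠ ⊤ := measure_ne_top _ _
  have hcne : c ≠ ⊤ := measure_ne_top _ _
  have hdne : d ≠ ⊤ := measure_ne_top _ _
  have hene : e ≠ ⊤ := measure_ne_top _ _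
  -- inner sums finite
  have hFinner : ∀ x : ℕ, (∑' y : ℕ, F x y) ≠ ⊤ := by
    intro x
    have : (∑' y : ℕ, F x y) ≤ a := by
      rw [ha2]; exact ENNReal.le_tsum x
    exact ne_top_of_le_ne_top hane this
  have hGinner : ∀ x : ℕ, (∑' y : ℕ, G x y) ≠ ⊤ := by
    intro x
    have : (∑' y : ℕ, G x y) ≤ e := by
      rw [he2]; exact ENNReal.le_tsum x
    exact ne_top_of_le_ne_top hene this
  -- real abbreviations
  set A := a.toReal with hA
  set B := b.toReal with hB
  set C := c.toReal with hC
  set D := d.toReal with hD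
  set E := e.toReal with hE
  -- real-valued expansions
  have hAsum : A = ∑' x : ℕ, ∑' y : ℕ, (F x y).toReal := by
    rw [hA, ha2, ENNReal.tsum_toReal_eq hFinner]
    congr 1
    ext x
    rw [ENNReal.tsum_toReal_eq (fun y => ENNReal.mul_ne_top (measure_ne_top _ _) (measure_ne_top _ _))]
  have hEsum : E = ∑' x : ℕ, ∑' y : ℕ, (G x y).toReal := by
    rw [hE, he2, ENNReal.tsum_toReal_eq hGinner]
    congr 1
    ext x
    rw [ENNReal.tsum_toReal_eq (fun y => ENNReal.mul_ne_top (measure_ne_top _ _) (measure_ne_top _ _))]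
  have hCsum : (∑' x : ℕ, (fX x) ^ 2) = C := by
    rw [hC, hc2, ENNReal.tsum_toReal_eq (fun x => ENNReal.mul_ne_top (measure_ne_top _ _) (measure_ne_top _ _))]
    congr 1
    ext x
    rw [hfXμ, ENNReal.toReal_mul, sq]
  have hDsum : (∑' y : ℕ, (fY y) ^ 2) = D := by
    rw [hD, hd2, ENNReal.tsum_toReal_eq (fun y => ENNReal.mul_ne_top (measure_ne_top _ _) (measure_ne_top _ _))]
    congr 1
    ext y
    rw [hfYμ, ENNReal.toReal_mul, sq]
  -- summability facts
  have hsumF : ∀ x : ℕ, Summable (fun y : ℕ => (F x y).toReal) :=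
    fun x => ENNReal.summable_toReal (hFinner x)
  have hsumG : ∀ x : ℕ, Summable (fun y : ℕ => (G x y).toReal) :=
    fun x => ENNReal.summable_toReal (hGinner x)
  have hsumFo : Summable (fun x : ℕ => ∑' y : ℕ, (F x y).toReal) := by
    have : Summable (fun x : ℕ => (∑' y : ℕ, F x y).toReal) := by
      apply ENNReal.summable_toReal
      rw [← ha2]; exact hane
    convert this using 2 with x
    rw [ENNReal.tsum_toReal_eq (fun y => ENNReal.mul_ne_top (measure_ne_top _ _) (measure_ne_top _ _))]
  have hsumGo : Summable (fun x : ℕ => ∑' y : ℕ, (G x y).toReal) := by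
    have : Summable (fun x : ℕ => (∑' y : ℕ, G x y).toReal) := by
      apply ENNReal.summable_toReal
      rw [← he2]; exact hene
    convert this using 2 with x
    rw [ENNReal.tsum_toReal_eq (fun y => ENNReal.mul_ne_top (measure_ne_top _ _) (measure_ne_top _ _))]
  -- main double-sum identity
  have hmain : (∑' x : ℕ, ∑' y : ℕ, h x y * (4 * H ((x : ℤ) - 1) ((y : ℤ) - 1) - h x y)) =
      4 * A - E := by
    have hinner : ∀ x : ℕ, (∑' y : ℕ, h x y * (4 * H ((x : ℤ) - 1) ((y : ℤ) - 1) - h x y)) =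
        4 * (∑' y : ℕ, (F x y).toReal) - (∑' y : ℕ, (G x y).toReal) := by
      intro x
      have hterm : ∀ y : ℕ, h x y * (4 * H ((x : ℤ) - 1) ((y : ℤ) - 1) - h x y) =
          4 * (F x y).toReal - (G x y).toReal := by
        intro y
        rw [hhμ, hHμ, hF, hG]
        simp only [ENNReal.toReal_mul]
        ring
      calc (∑' y : ℕ, h x y * (4 * H ((x : ℤ) - 1) ((y : ℤ) - 1) - h x y))
          = ∑' y : ℕ, (4 * (F x y).toReal - (G x y).toReal) := by
            congr 1; ext y; exact hterm y
        _ = (∑' y : ℕ, 4 * (F x y).toReal) - ∑' y : ℕ, (G x y).toReal := by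
            exact Summable.tsum_sub ((hsumF x).mul_left 4) (hsumG x)
        _ = 4 * (∑' y : ℕ, (F x y).toReal) - ∑' y : ℕ, (G x y).toReal := by
            rw [tsum_mul_left]
    calc (∑' x : ℕ, ∑' y : ℕ, h x y * (4 * H ((x : ℤ) - 1) ((y : ℤ) - 1) - h x y))
        = ∑' x : ℕ, (4 * (∑' y : ℕ, (F x y).toReal) - (∑' y : ℕ, (G x y).toReal)) := by
          congr 1; ext x; exact hinner x
      _ = (∑' x : ℕ, 4 * (∑' y : ℕ, (F x y).toReal)) - ∑' x : ℕ, ∑' y : ℕ, (G x y).toReal := by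
          exact Summable.tsum_sub (hsumFo.mul_left 4) hsumGo
      _ = 4 * A - E := by
          rw [tsum_mul_left, ← hAsum, ← hEsum]
  -- real version of total decomposition
  have tne : ∀ {u v : ENNReal}, u ≠ ⊤ → v ≠ ⊤ → u + v ≠ ⊤ :=
    fun hu hv => ENNReal.add_ne_top.mpr ⟨hu, hv⟩
  have htotR : 1 + E = A + A + (B + B) + (C + D) := by
    have h1R := congrArg ENNReal.toReal htotE
    rw [ENNReal.toReal_add ENNReal.one_ne_top hene,
      ENNReal.toReal_add (tne (tne hane hane) (tne hbne hbne)) (tne hcne hdne),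
      ENNReal.toReal_add (tne hane hane) (tne hbne hbne),
      ENNReal.toReal_add hane hane, ENNReal.toReal_add hbne hbne,
      ENNReal.toReal_add hcne hdne, ENNReal.toReal_one,
      ← hA, ← hB, ← hC, ← hD, ← hE] at h1R
    exact h1R
  -- finish
  rw [hpos, hneg, ENNReal.toReal_add hane hane, ENNReal.toReal_add hbne hbne,
    ← hA, ← hB, hmain, hCsum, hDsum]
  linarith
end
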